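/- Optimal solution of the knapsack trust-region subproblem flips coordinates with the most negative gains: for v⁰ ∈ {0,1}^N and g ∈ ℝ^N, define the gain of flipping coordinate i as c_i = g_i(1 - 2v⁰_i). Then the minimum of gᵀ(v - v⁰) over v ∈ {0,1}^N with ‖v - v⁰‖₁ ≤ Δ equals the sum of the min(⌊Δ⌋, k) most negative values among {c_i : c_i < 0}, where k is the number of negative c_i. -/
import Mathlib

/-- There exists a subset of `neg` of any card `m ≤ neg.card` consisting of the
`m` smallest elements with respect to `c`. -/
lemma exists_bottom {α : Type*} [DecidableEq α] (c : α → ℝ) (neg : Finset α) :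
    ∀ m, m ≤ neg.card →
      ∃ S, S ⊆ neg ∧ S.card = m ∧ ∀ i ∈ S, ∀ j ∈ neg, j ∉ S → c i ≤ c j := by
  intro m
  induction m with
  | zero => exact fun _ => ⟨∅, Finset.empty_subset _, rfl, by simp⟩
  | succ n ih =>
    intro h
    obtain ⟨S, hsub, hcard, hmin⟩ := ih (Nat.le_of_succ_le h)
    have hne : (neg \ S).Nonempty := by
      rw [← Finset.card_pos, Finset.card_sdiff_of_subset hsub]
      omega
    obtain ⟨j, hj, hjmin⟩ := Finset.exists_min_image (neg \ S) c hne
    have hjS : j ∉ S := (Finset.mem_sdiff.mp hj).2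
    refine ⟨insert j S, ?_, ?_, ?_⟩
    · exact Finset.insert_subset (Finset.mem_sdiff.mp hj).1 hsub
    · rw [Finset.card_insert_of_notMem hjS, hcard]
    · intro i hi j' hj' hj'S
      rcases Finset.mem_insert.mp hi with rfl | hiS
      · exact hjmin j' (Finset.mem_sdiff.mpr ⟨hj', fun h => hj'S (Finset.mem_insert_of_mem h)⟩)
      · exact hmin i hiS j' hj' (fun h => hj'S (Finset.mem_insert_of_mem h))

lemma aux_sum_le {α : Type*} [DecidableEq α] (c : α → ℝ) (neg S T : Finset α)
    (_hS : S ⊆ neg) (hT : T ⊆ neg) (hcard : T.card ≤ S.card)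
    (hneg : ∀ i ∈ S, c i < 0)
    (hmin : ∀ i ∈ S, ∀ j ∈ neg, j ∉ S → c i ≤ c j) :
    ∑ i ∈ S, c i ≤ ∑ i ∈ T, c i := by
  have h1 : (T \ S).card ≤ (S \ T).card := by
    have e1 := Finset.card_inter_add_card_sdiff S T
    have e2 := Finset.card_inter_add_card_sdiff T S
    have e3 : (S ∩ T).card = (T ∩ S).card := by rw [Finset.inter_comm]
    omega
  obtain ⟨A, hA_sub, hA_card⟩ := Finset.exists_subset_card_eq h1
  have hAS : A ⊆ S := hA_sub.trans Finset.sdiff_subset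
  have step1 : ∑ i ∈ S \ T, c i ≤ ∑ i ∈ A, c i := by
    have hrest : ∑ i ∈ (S \ T) \ A, c i ≤ 0 :=
      Finset.sum_nonpos fun i hi =>
        le_of_lt (hneg i ((Finset.sdiff_subset.trans Finset.sdiff_subset) hi))
    have := Finset.sum_sdiff (f := c) hA_sub
    linarith
  have step2 : ∑ i ∈ A, c i ≤ ∑ j ∈ T \ S, c j := by
    have e := Finset.equivOfCardEq hA_card
    calc ∑ i ∈ A, c i = ∑ x : A, c x := (Finset.sum_coe_sort A c).symm
      _ = ∑ y : (T \ S : Finset α), c (e.symm y) :=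
          (Equiv.sum_comp e.symm (fun x : A => c (x : α))).symm
      _ ≤ ∑ y : (T \ S : Finset α), c y := by
          apply Finset.sum_le_sum
          intro y _
          have hyT : (y : α) ∈ T \ S := y.2
          have hyneg : (y : α) ∈ neg := hT (Finset.mem_sdiff.mp hyT).1
          have hynS : (y : α) ∉ S := (Finset.mem_sdiff.mp hyT).2
          have hmem : ((e.symm y : A) : α) ∈ S := hAS (e.symm y).2
          exact hmin _ hmem _ hyneg hynS
      _ = ∑ j ∈ T \ S, c j := Finset.sum_coe_sort _ c
  have i1 := Finset.sum_inter_add_sum_sdiff S T c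
  have i2 := Finset.sum_inter_add_sum_sdiff T S c
  have i3 : ∑ i ∈ S ∩ T, c i = ∑ i ∈ T ∩ S, c i := by rw [Finset.inter_comm]
  linarith

/-- The optimal value of the knapsack trust-region subproblem is the sum of the
`min(Δ, k)` most negative flipping gains `c_i = g_i(1 - 2v⁰_i)`, where `k` is the number
of negative gains. -/
theorem stmt14 (N : ℕ) (g v0 : Fin N → ℝ) (Δ : ℕ)
    (hv0 : ∀ i, v0 i = 0 ∨ v0 i = 1)
    (c : Fin N → ℝ) (hc : c = fun i => g i * (1 - 2 * v0 i))
    (F : Set (Fin N → ℝ))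
    (hF : F = {v | (∀ i, v i = 0 ∨ v i = 1) ∧ ∑ i, |v i - v0 i| ≤ (Δ : ℝ)})
    (k : ℕ) (hk : k = (Finset.univ.filter fun i => c i < 0).card) :
    ∃ S : Finset (Fin N),
      (∀ i ∈ S, c i < 0) ∧
      S.card = min Δ k ∧
      (∀ i ∈ S, ∀ j ∉ S, c j < 0 → c i ≤ c j) ∧
      IsLeast {x : ℝ | ∃ v ∈ F, x = ∑ i, g i * (v i - v0 i)} (∑ i ∈ S, c i) := by
  set neg : Finset (Fin N) := Finset.univ.filter fun i => c i < 0 with hneg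
  have hmk : min Δ k ≤ neg.card := by rw [hk]; exact min_le_right _ _
  obtain ⟨S, hSsub, hScard, hSmin⟩ := exists_bottom c neg (min Δ k) hmk
  have hSneg : ∀ i ∈ S, c i < 0 := fun i hi => (Finset.mem_filter.mp (hSsub hi)).2
  refine ⟨S, hSneg, hScard, ?_, ?_, ?_⟩
  · intro i hi j hjS hj
    exact hSmin i hi j (by simp [hneg, hj]) hjS
  · -- membership: the flipped point achieves the value
    refine ⟨fun i => if i ∈ S then 1 - v0 i else v0 i, ?_, ?_⟩
    · rw [hF]
      constructor
      · intro i
        by_cases h : i ∈ S <;> rcases hv0 i with h0 | h0 <;> simp [h, h0] <;> tauto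
      · have habs : ∀ i, |(if i ∈ S then 1 - v0 i else v0 i) - v0 i|
            = if i ∈ S then (1:ℝ) else 0 := by
          intro i
          by_cases h : i ∈ S <;> rcases hv0 i with h0 | h0 <;>
            simp [h, h0] <;> norm_num
        calc ∑ i, |(if i ∈ S then 1 - v0 i else v0 i) - v0 i|
            = ∑ i : Fin N, (if i ∈ S then (1:ℝ) else 0) :=
              Finset.sum_congr rfl fun i _ => habs i
          _ = S.card := by
              rw [Finset.sum_ite_mem, Finset.univ_inter, Finset.sum_const,
                nsmul_eq_mul, mul_one]
          _ ≤ (Δ : ℝ) := by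
              rw [hScard]
              exact_mod_cast Nat.cast_le.mpr (min_le_left Δ k)
    · have hterm : ∀ i, g i * ((if i ∈ S then 1 - v0 i else v0 i) - v0 i)
          = if i ∈ S then c i else 0 := by
        intro i
        by_cases h : i ∈ S
        · simp only [if_pos h, hc]; ring
        · simp [h]
      rw [Finset.sum_congr rfl fun i _ => hterm i, Finset.sum_ite_mem,
        Finset.univ_inter]
  · -- lower bound
    rintro x ⟨v, hvF, rfl⟩
    rw [hF] at hvF
    obtain ⟨hvbin, hvsum⟩ := hvF
    set T : Finset (Fin N) := Finset.univ.filter fun i => v i ≠ v0 i with hT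
    have hterm : ∀ i, g i * (v i - v0 i) = if v i = v0 i then 0 else c i := by
      intro i
      rcases hv0 i with h0 | h0 <;> rcases hvbin i with h1 | h1 <;>
        simp [h0, h1, hc] <;> norm_num <;> ring
    have habs : ∀ i, |v i - v0 i| = if v i = v0 i then (0:ℝ) else 1 := by
      intro i
      rcases hv0 i with h0 | h0 <;> rcases hvbin i with h1 | h1 <;>
        simp [h0, h1] <;> norm_num
    have hsumT : ∑ i, g i * (v i - v0 i) = ∑ i ∈ T, c i := by
      rw [Finset.sum_congr rfl fun i _ => hterm i, hT]
      rw [Finset.sum_ite, Finset.sum_const_zero, zero_add]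
    have hcardT : (T.card : ℝ) ≤ (Δ : ℝ) := by
      have : ∑ i, |v i - v0 i| = (T.card : ℝ) := by
        rw [Finset.sum_congr rfl fun i _ => habs i, Finset.sum_ite,
          Finset.sum_const_zero, zero_add, Finset.sum_const, nsmul_eq_mul, mul_one]
      linarith
    have hTΔ : T.card ≤ Δ := by exact_mod_cast hcardT
    have h1 : ∑ i ∈ S, c i ≤ ∑ i ∈ T ∩ neg, c i := by
      apply aux_sum_le c neg S (T ∩ neg) hSsub Finset.inter_subset_right
      · rw [hScard]
        exact le_min ((Finset.card_le_card Finset.inter_subset_left).trans hTΔ)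
          (hk ▸ Finset.card_le_card Finset.inter_subset_right)
      · exact hSneg
      · exact hSmin
    have h2 : ∑ i ∈ T ∩ neg, c i ≤ ∑ i ∈ T, c i := by
      apply Finset.sum_le_sum_of_subset_of_nonneg Finset.inter_subset_left
      intro i hiT hinot
      have : i ∉ neg := fun h => hinot (Finset.mem_inter.mpr ⟨hiT, h⟩)
      simp [hneg] at this
      exact this
    rw [hsumT]
    linarith
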